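/- Let k be a field, let u, v ∈ k be nonzero, and set f(u,v) = (u⁴−1)(v⁴−1)(u²−v²)(u²v²−1). The six points of ℙ²(k) with coordinate triples (u²,u,1), (u^{−2},u^{−1},1), (v²,v,1), (v^{−2},v^{−1},1), (1,0,0), (0,1,0) are in general position if and only if f(u,v) ≠ 0. -/

import Mathlib

/-!
The points `(t², t, 1)` lie on the conic `xz = y²`, which also passes through `(1, 0, 0)`. A linear
form `αx + βy + γz` restricts to the quadratic `αt² + βt + γ` on this conic, and a quadratic form
vanishing at `(1, 0, 0)` and `(0, 1, 0)` has no `x²` and `y²` terms, so it restricts to a cubic in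
`t`. Hence lines and conics through too many of the six points are excluded by counting roots,
as long as the parameters `t` have pairwise distinct squares; the squares enter through the lines
`x = t²z` joining `(0, 1, 0)` to the points of the conic. Conversely, two parameters with the same
square put three of the points on such a line. For `sixTriples u v` the parameters are
`u, u⁻¹, v, v⁻¹`, and `f(u, v) ≠ 0` says exactly that their squares are pairwise distinct.
-/

/-- Six points of the projective plane given by coordinate triples are *in general position* if:
they are pairwise distinct as projective points (no two triples are proportional), no three of
them lie on a line (no nonzero linear form vanishes at three of the triples), and the six do not
all lie on a conic (no nonzero quadratic form vanishes at all six triples). -/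
def InGeneralPosition6 {k : Type*} [Field k] (P : Fin 6 → Fin 3 → k) : Prop :=
  (∀ i j : Fin 6, i ≠ j → ¬∃ c : k, c ≠ 0 ∧ P j = c • P i) ∧
  (∀ i j l : Fin 6, i ≠ j → i ≠ l → j ≠ l →
    ¬∃ α β γ : k, (α, β, γ) ≠ (0, 0, 0) ∧
      ∀ m ∈ ({i, j, l} : Set (Fin 6)), α * P m 0 + β * P m 1 + γ * P m 2 = 0) ∧
  ¬∃ a b c d e f : k, (a, b, c, d, e, f) ≠ (0, 0, 0, 0, 0, 0) ∧
    ∀ m : Fin 6,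
      a * P m 0 ^ 2 + b * P m 1 ^ 2 + c * P m 2 ^ 2 +
        d * (P m 0 * P m 1) + e * (P m 0 * P m 2) + f * (P m 1 * P m 2) = 0

/-- The six coordinate triples `(u²,u,1), (u⁻²,u⁻¹,1), (v²,v,1), (v⁻²,v⁻¹,1), (1,0,0), (0,1,0)`. -/
def sixTriples {k : Type*} [Field k] (u v : k) : Fin 6 → Fin 3 → k :=
  ![![u ^ 2, u, 1], ![(u ^ 2)⁻¹, u⁻¹, 1], ![v ^ 2, v, 1], ![(v ^ 2)⁻¹, v⁻¹, 1],
    ![1, 0, 0], ![0, 1, 0]]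

open Function

section

variable {k : Type*} [Field k]

theorem affine_coeffs_eq_zero {a b x y : k} (hxy : x ≠ y) (hx : a * x + b = 0)
    (hy : a * y + b = 0) : a = 0 ∧ b = 0 := by
  have ha : a = 0 := by
    have h : a * (x - y) = 0 := by linear_combination hx - hy
    exact (mul_eq_zero.mp h).resolve_right (sub_ne_zero.mpr hxy)
  exact ⟨ha, by simpa [ha] using hx⟩

theorem quadratic_coeffs_eq_zero {α β γ r s t : k} (hrs : r ≠ s) (hrt : r ≠ t) (hst : s ≠ t)
    (hr : α * r ^ 2 + β * r + γ = 0) (hs : α * s ^ 2 + β * s + γ = 0)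
    (ht : α * t ^ 2 + β * t + γ = 0) : α = 0 ∧ β = 0 ∧ γ = 0 := by
  have hinj : Injective ![r, s, t] := by
    intro i j hij
    fin_cases i <;> fin_cases j <;> simp_all [eq_comm]
  have h := Matrix.eq_zero_of_forall_index_sum_mul_pow_eq_zero hinj (v := ![γ, β, α]) (by
    intro j
    simp only [Fin.sum_univ_three, Matrix.cons_val, Fin.val_zero, Fin.val_one, Fin.val_two]
    fin_cases j <;> simp only [Fin.zero_eta, Fin.mk_one, Fin.reduceFinMk, Matrix.cons_val]
    · linear_combination hr
    · linear_combination hs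
    · linear_combination ht)
  obtain ⟨hγ, hβ, hα⟩ : γ = 0 ∧ β = 0 ∧ α = 0 := by
    simpa [funext_iff, Fin.forall_fin_succ] using h
  exact ⟨hα, hβ, hγ⟩

theorem cubic_coeffs_eq_zero {c d e f : k} {t : Fin 4 → k} (ht : Injective t)
    (h : ∀ i, d * t i ^ 3 + e * t i ^ 2 + f * t i + c = 0) : d = 0 ∧ e = 0 ∧ f = 0 ∧ c = 0 := by
  have h := Matrix.eq_zero_of_forall_index_sum_mul_pow_eq_zero ht (v := ![c, f, e, d])
    (by
      intro j
      simp only [Fin.sum_univ_four, Matrix.cons_val, Fin.coe_ofNat_eq_mod]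
      linear_combination h j)
  obtain ⟨hc, hf, he, hd⟩ : c = 0 ∧ f = 0 ∧ e = 0 ∧ d = 0 := by
    simpa [funext_iff, Fin.forall_fin_succ] using h
  exact ⟨hd, he, hf, hc⟩

def conicPoint (t : k) : Fin 3 → k := ![t ^ 2, t, 1]

def pointAtInfinity : Fin 2 → Fin 3 → k := ![![1, 0, 0], ![0, 1, 0]]

def sixPoints (t : Fin 4 → k) : Fin (4 + 2) → Fin 3 → k :=
  Fin.append (conicPoint ∘ t) pointAtInfinity

@[simp]
theorem sixPoints_castAdd (t : Fin 4 → k) (a : Fin 4) :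
    sixPoints t (Fin.castAdd 2 a) = conicPoint (t a) :=
  Fin.append_left _ _ a

@[simp]
theorem sixPoints_natAdd (t : Fin 4 → k) (x : Fin 2) :
    sixPoints t (Fin.natAdd 4 x) = pointAtInfinity x :=
  Fin.append_right _ _ x

def linearFormAt (α β γ : k) (x : Fin 3 → k) : k := α * x 0 + β * x 1 + γ * x 2

@[simp]
theorem linearFormAt_conicPoint (α β γ t : k) :
    linearFormAt α β γ (conicPoint t) = α * t ^ 2 + β * t + γ := by
  simp [linearFormAt, conicPoint]

theorem linearForm_eq_zero_of_two_conicPoints {α β γ s t : k} (hst : s ^ 2 ≠ t ^ 2) (x : Fin 2)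
    (hs : α * s ^ 2 + β * s + γ = 0) (ht : α * t ^ 2 + β * t + γ = 0)
    (hx : linearFormAt α β γ (pointAtInfinity x) = 0) : α = 0 ∧ β = 0 ∧ γ = 0 := by
  fin_cases x
  · obtain rfl : α = 0 := by simpa [linearFormAt, pointAtInfinity] using hx
    have hst' : s ≠ t := fun h => hst (h ▸ rfl)
    obtain ⟨rfl, rfl⟩ := affine_coeffs_eq_zero hst' (by simpa using hs) (by simpa using ht)
    exact ⟨rfl, rfl, rfl⟩
  · obtain rfl : β = 0 := by simpa [linearFormAt, pointAtInfinity] using hx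
    obtain ⟨rfl, rfl⟩ := affine_coeffs_eq_zero hst (by simpa using hs) (by simpa using ht)
    exact ⟨rfl, rfl, rfl⟩

theorem linearForm_eq_zero_of_conicPoint_pointsAtInfinity {α β γ t : k} {x y : Fin 2}
    (hxy : x ≠ y) (ht : α * t ^ 2 + β * t + γ = 0)
    (hx : linearFormAt α β γ (pointAtInfinity x) = 0)
    (hy : linearFormAt α β γ (pointAtInfinity y) = 0) : α = 0 ∧ β = 0 ∧ γ = 0 := by
  obtain ⟨rfl, rfl⟩ : α = 0 ∧ β = 0 := by
    fin_cases x <;> fin_cases y <;> simp_all [linearFormAt, pointAtInfinity]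
  simpa using ht

theorem linearForm_eq_zero_of_sixPoints {α β γ : k} {t : Fin 4 → k}
    (ht : Injective fun i => t i ^ 2) {i j l : Fin 6} (hij : i ≠ j) (hil : i ≠ l) (hjl : j ≠ l)
    (hi : linearFormAt α β γ (sixPoints t i) = 0) (hj : linearFormAt α β γ (sixPoints t j) = 0)
    (hl : linearFormAt α β γ (sixPoints t l) = 0) : α = 0 ∧ β = 0 ∧ γ = 0 := by
  have hsq {a b : Fin 4} (h : Fin.castAdd 2 a ≠ Fin.castAdd 2 b) : t a ^ 2 ≠ t b ^ 2 :=
    ht.ne (ne_of_apply_ne _ h)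
  -- `Fin.addCases` needs the index type in the form `Fin (4 + 2)`
  change Fin (4 + 2) at i j l
  induction i using Fin.addCases <;> induction j using Fin.addCases <;>
    induction l using Fin.addCases <;>
    simp only [sixPoints_castAdd, sixPoints_natAdd, linearFormAt_conicPoint] at hi hj hl
  case left.left.left =>
    have ht' : Injective t := ht.of_comp
    exact quadratic_coeffs_eq_zero (ht'.ne (ne_of_apply_ne _ hij))
      (ht'.ne (ne_of_apply_ne _ hil)) (ht'.ne (ne_of_apply_ne _ hjl)) hi hj hl
  case left.left.right => exact linearForm_eq_zero_of_two_conicPoints (hsq hij) _ hi hj hl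
  case left.right.left => exact linearForm_eq_zero_of_two_conicPoints (hsq hil) _ hi hl hj
  case right.left.left => exact linearForm_eq_zero_of_two_conicPoints (hsq hjl) _ hj hl hi
  case left.right.right =>
    exact linearForm_eq_zero_of_conicPoint_pointsAtInfinity (ne_of_apply_ne _ hjl) hi hj hl
  case right.left.right =>
    exact linearForm_eq_zero_of_conicPoint_pointsAtInfinity (ne_of_apply_ne _ hil) hj hi hl
  case right.right.left =>
    exact linearForm_eq_zero_of_conicPoint_pointsAtInfinity (ne_of_apply_ne _ hij) hl hi hj
  case right.right.right x y z => fin_cases x <;> fin_cases y <;> fin_cases z <;> simp_all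

theorem sixPoints_ne_smul {t : Fin 4 → k} (ht : Injective t) {i j : Fin 6} (hij : i ≠ j) :
    ¬∃ c : k, c ≠ 0 ∧ sixPoints t j = c • sixPoints t i := by
  rintro ⟨c, hc, h⟩
  change Fin (4 + 2) at i j
  induction i using Fin.addCases <;> induction j using Fin.addCases <;>
    simp only [sixPoints_castAdd, sixPoints_natAdd] at h
  case left.left =>
    obtain rfl : c = 1 := by simpa [conicPoint, eq_comm] using congrFun h 2
    exact hij (congrArg _ <| ht (by simpa [conicPoint] using (congrFun h 1).symm))
  case left.right _ y =>
    exact hc (by fin_cases y <;> simpa [conicPoint, pointAtInfinity, eq_comm] using congrFun h 2)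
  case right.left x _ =>
    fin_cases x <;> simpa [conicPoint, pointAtInfinity] using congrFun h 2
  case right.right x y =>
    fin_cases x <;> fin_cases y
    all_goals first
      | exact hij rfl
      | exact hc (by simpa [pointAtInfinity, eq_comm] using congrFun h 0)

theorem quadForm_eq_zero_of_sixPoints {t : Fin 4 → k} (ht : Injective t) {a b c d e f : k}
    (h : ∀ m : Fin 6, a * sixPoints t m 0 ^ 2 + b * sixPoints t m 1 ^ 2 + c * sixPoints t m 2 ^ 2 +
      d * (sixPoints t m 0 * sixPoints t m 1) + e * (sixPoints t m 0 * sixPoints t m 2) +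
      f * (sixPoints t m 1 * sixPoints t m 2) = 0) :
    (a, b, c, d, e, f) = (0, 0, 0, 0, 0, 0) := by
  have h₀ := h (Fin.natAdd 4 (0 : Fin 2))
  have h₁ := h (Fin.natAdd 4 (1 : Fin 2))
  simp only [sixPoints_natAdd] at h₀ h₁
  obtain rfl : a = 0 := by simpa [pointAtInfinity] using h₀
  obtain rfl : b = 0 := by simpa [pointAtInfinity] using h₁
  have hcubic (i : Fin 4) : d * t i ^ 3 + e * t i ^ 2 + f * t i + c = 0 := by
    have hi := h (Fin.castAdd 2 i)
    simp only [sixPoints_castAdd, conicPoint, Matrix.cons_val] at hi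
    linear_combination hi
  obtain ⟨rfl, rfl, rfl, rfl⟩ := cubic_coeffs_eq_zero ht hcubic
  rfl

theorem not_inGeneralPosition6_sixPoints {t : Fin 4 → k} {a b : Fin 4} (hab : a ≠ b)
    (h : t a ^ 2 = t b ^ 2) : ¬InGeneralPosition6 (sixPoints t) := by
  rintro ⟨-, hline, -⟩
  refine hline (Fin.castAdd 2 a) (Fin.castAdd 2 b) (Fin.natAdd 4 (1 : Fin 2)) ?_ ?_ ?_
    ⟨1, 0, -t a ^ 2, by simp, ?_⟩
  · exact (Fin.castAdd_injective 4 2).ne hab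
  · exact Fin.ne_of_val_ne (by rw [Fin.val_castAdd, Fin.val_natAdd]; omega)
  · exact Fin.ne_of_val_ne (by rw [Fin.val_castAdd, Fin.val_natAdd]; omega)
  · intro m hm
    simp only [Set.mem_insert_iff, Set.mem_singleton_iff] at hm
    rcases hm with rfl | rfl | rfl <;> simp only [sixPoints_castAdd, sixPoints_natAdd] <;>
      simp [conicPoint, pointAtInfinity, h]

theorem inGeneralPosition6_sixPoints_iff {t : Fin 4 → k} :
    InGeneralPosition6 (sixPoints t) ↔ Injective fun i => t i ^ 2 := by
  refine ⟨fun h a b hab => by_contra fun hne => not_inGeneralPosition6_sixPoints hne hab h,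
    fun ht => ?_⟩
  have ht' : Injective t := ht.of_comp
  refine ⟨fun i j hij => sixPoints_ne_smul ht' hij, ?_, ?_⟩
  · rintro i j l hij hil hjl ⟨α, β, γ, hne, hvan⟩
    obtain ⟨rfl, rfl, rfl⟩ := linearForm_eq_zero_of_sixPoints ht hij hil hjl (hvan i (by simp))
      (hvan j (by simp)) (hvan l (by simp))
    exact hne rfl
  · rintro ⟨a, b, c, d, e, f, hne, hvan⟩
    exact hne (quadForm_eq_zero_of_sixPoints ht' hvan)

theorem sixTriples_eq_sixPoints (u v : k) : sixTriples u v = sixPoints ![u, u⁻¹, v, v⁻¹] := by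
  ext i j
  fin_cases i <;> fin_cases j <;>
    simp [sixTriples, sixPoints, Fin.append, Fin.addCases, conicPoint, pointAtInfinity, inv_pow]

theorem injective_vec4_iff {α : Type*} {a b c d : α} :
    Injective ![a, b, c, d] ↔ a ≠ b ∧ a ≠ c ∧ a ≠ d ∧ b ≠ c ∧ b ≠ d ∧ c ≠ d := by
  simp only [Matrix.vecCons, Fin.cons_injective_iff]
  simp only [Matrix.Fin.cons_vecCons, Matrix.Fin.cons_vecEmpty, Matrix.range_cons,
    Matrix.range_empty, Set.union_empty, Set.union_singleton, Set.union_insert, Set.mem_insert_iff,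
    Set.mem_singleton_iff, Set.mem_empty_iff_false, Injective, IsEmpty.forall_iff]
  tauto

theorem ne_inv_sq_iff {a b : k} (hb : b ≠ 0) : a ≠ (b ^ 2)⁻¹ ↔ a * b ^ 2 - 1 ≠ 0 := by
  rw [sub_ne_zero, ne_eq, ne_eq, mul_eq_one_iff_eq_inv₀ (pow_ne_zero 2 hb)]

theorem injective_sq_vec_inv_iff {u v : k} (hu : u ≠ 0) (hv : v ≠ 0) :
    (Injective fun i => (![u, u⁻¹, v, v⁻¹] : Fin 4 → k) i ^ 2) ↔
      (u ^ 4 - 1) * (v ^ 4 - 1) * (u ^ 2 - v ^ 2) * (u ^ 2 * v ^ 2 - 1) ≠ 0 := by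
  have hsq : (fun i => (![u, u⁻¹, v, v⁻¹] : Fin 4 → k) i ^ 2) =
      ![u ^ 2, (u ^ 2)⁻¹, v ^ 2, (v ^ 2)⁻¹] := by
    ext i
    fin_cases i <;> simp [inv_pow]
  rw [hsq, injective_vec4_iff, inv_injective.ne_iff, ne_comm (a := (u ^ 2)⁻¹), ne_inv_sq_iff hu,
    ne_inv_sq_iff hv, ne_inv_sq_iff hu, ne_inv_sq_iff hv]
  simp only [mul_ne_zero_iff, ← pow_add, mul_comm (v ^ 2) (u ^ 2), sub_ne_zero]
  tauto

end

theorem generalPosition_iff {k : Type*} [Field k] (u v : k) (hu : u ≠ 0) (hv : v ≠ 0) :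
    InGeneralPosition6 (sixTriples u v) ↔
      (u ^ 4 - 1) * (v ^ 4 - 1) * (u ^ 2 - v ^ 2) * (u ^ 2 * v ^ 2 - 1) ≠ 0 := by
  rw [sixTriples_eq_sixPoints, inGeneralPosition6_sixPoints_iff, injective_sq_vec_inv_iff hu hv]
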